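/- arXiv:1408.4500 — 3 statements merged into one kernel-verified Lean document; each statement's English description precedes it below -/
import Mathlib

section
/- Let x ∈ ℝⁿ satisfy l ≤ x ≤ u componentwise and let v ∈ ℝⁿ. If there exists a scalar ξ_s > 0 such that P(x − ξ_s·v) = x, then P(x − ξ·v) = x for every ξ > 0. -/
/-- Componentwise projection onto the box `[l, u]`. -/
noncomputable def boxProj {n : ℕ} (l u z : Fin n → ℝ) : Fin n → ℝ :=
  fun i => max (l i) (min (u i) (z i))

/-- If `l ≤ x ≤ u` and `P(x - ξₛ v) = x` for some `ξₛ > 0`, then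
`P(x - ξ v) = x` for every `ξ > 0`. -/
theorem stmt0 {n : ℕ} (l u x v : Fin n → ℝ)
    (hlu : ∀ i, l i ≤ u i) (hlx : ∀ i, l i ≤ x i) (hxu : ∀ i, x i ≤ u i)
    (ξs : ℝ) (hξs : 0 < ξs) (h : boxProj l u (x - ξs • v) = x) :
    ∀ ξ : ℝ, 0 < ξ → boxProj l u (x - ξ • v) = x := by
  intro ξ hξ
  funext i
  have hi := congrFun h i
  have h1 := hlx i
  have h2 := hxu i
  have h3 := hlu i
  simp only [boxProj, Pi.sub_apply, Pi.smul_apply, smul_eq_mul, max_def, min_def] at hi ⊢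
  split_ifs at hi ⊢ <;> nlinarith [mul_pos hξs hξ, sq_nonneg (v i)]
end

section
/- Let x ∈ ℝⁿ satisfy l ≤ x ≤ u componentwise, let a ∈ ℝⁿ, c ∈ ℝ^m, and J ∈ ℝ^{m×n}. Assume that (i) if c = 0 then P(x − a) ≠ x, and (ii) if c ≠ 0 then P(x − Jᵀc) ≠ x. Then there exists μ̄ > 0 such that P(x − μ·a − Jᵀc) ≠ x for all μ ∈ (0, μ̄]. (With a = g − Jᵀy this says the augmented-Lagrangian stationarity measure F_AL(x, y, μ) = P(x − μ(g − Jᵀy) − Jᵀc) − x is nonzero for all sufficiently small μ > 0 whenever x is neither first-order stationary for the equality-constrained problem nor an infeasible point that is stationary for the constraint violation measure.) -/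
lemma scalar_pos {l u x w : ℝ} (hl : l < x) (hw : 0 < w) :
    max l (min u (x - w)) ≠ x :=
  ne_of_lt (max_lt hl (lt_of_le_of_lt (min_le_right _ _) (by linarith)))

lemma scalar_neg {l u x w : ℝ} (hu : x < u) (hw : w < 0) :
    max l (min u (x - w)) ≠ x :=
  ne_of_gt (lt_of_lt_of_le (lt_min hu (by linarith)) (le_max_right _ _))

lemma scalar_extract {l u x b : ℝ} (hl : l ≤ x) (hu : x ≤ u)
    (h : max l (min u (x - b)) ≠ x) :
    (0 < b ∧ l < x) ∨ (b < 0 ∧ x < u) := by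
  rcases lt_trichotomy b 0 with hb | hb | hb
  · right
    refine ⟨hb, ?_⟩
    by_contra hxu
    have hxu' : x = u := le_antisymm hu (not_lt.mp hxu)
    apply h
    rw [← hxu', min_eq_left (by linarith), max_eq_right hl]
  · exfalso
    apply h
    rw [hb, sub_zero, min_eq_right hu, max_eq_right hl]
  · left
    refine ⟨hb, ?_⟩
    by_contra hlx
    have hlx' : l = x := le_antisymm hl (not_lt.mp hlx)
    apply h
    rw [max_eq_left (le_trans (min_le_right _ _) (by linarith))]
    exact hlx'

/-- If `x` with `l ≤ x ≤ u` satisfies: `P(x - a) ≠ x` whenever `c = 0`, and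
`P(x - Jᵀc) ≠ x` whenever `c ≠ 0`, then there is `μ̄ > 0` such that
`P(x - μ a - Jᵀ c) ≠ x` for all `μ ∈ (0, μ̄]`. -/
theorem stmt2 {n m : ℕ} (l u x a : Fin n → ℝ) (c : Fin m → ℝ)
    (J : Matrix (Fin m) (Fin n) ℝ)
    (hlu : ∀ i, l i ≤ u i) (hlx : ∀ i, l i ≤ x i) (hxu : ∀ i, x i ≤ u i)
    (h1 : c = 0 → boxProj l u (x - a) ≠ x)
    (h2 : c ≠ 0 → boxProj l u (x - J.transpose.mulVec c) ≠ x) :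
    ∃ μbar : ℝ, 0 < μbar ∧ ∀ μ : ℝ, 0 < μ → μ ≤ μbar →
      boxProj l u (x - μ • a - J.transpose.mulVec c) ≠ x := by
  set v : Fin n → ℝ := J.transpose.mulVec c with hv
  by_cases hc : c = 0
  · -- v = 0, use h1
    have hv0 : v = 0 := by rw [hv, hc, Matrix.mulVec_zero]
    obtain ⟨i, hi⟩ := Function.ne_iff.mp (h1 hc)
    have hi' : max (l i) (min (u i) (x i - a i)) ≠ x i := by
      simpa [boxProj] using hi
    rcases scalar_extract (hlx i) (hxu i) hi' with ⟨hb, hlxi⟩ | ⟨hb, hxui⟩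
    · refine ⟨1, one_pos, fun μ hμ _ => Function.ne_iff.mpr ⟨i, ?_⟩⟩
      have heq : (x - μ • a - v) i = x i - μ * a i := by
        simp [hv0, Pi.sub_apply]
      show max (l i) (min (u i) ((x - μ • a - v) i)) ≠ x i
      rw [heq]
      exact scalar_pos hlxi (by positivity)
    · refine ⟨1, one_pos, fun μ hμ _ => Function.ne_iff.mpr ⟨i, ?_⟩⟩
      have heq : (x - μ • a - v) i = x i - μ * a i := by
        simp [hv0, Pi.sub_apply]
      show max (l i) (min (u i) ((x - μ • a - v) i)) ≠ x i
      rw [heq]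
      exact scalar_neg hxui (by nlinarith)
  · obtain ⟨i, hi⟩ := Function.ne_iff.mp (h2 hc)
    have hi' : max (l i) (min (u i) (x i - v i)) ≠ x i := by
      simpa [boxProj, hv] using hi
    have heq : ∀ μ : ℝ, (x - μ • a - v) i = x i - (μ * a i + v i) := by
      intro μ; simp [Pi.sub_apply]; ring
    rcases scalar_extract (hlx i) (hxu i) hi' with ⟨hb, hlxi⟩ | ⟨hb, hxui⟩
    · refine ⟨v i / (|a i| + 1), by positivity, fun μ hμ hμb => Function.ne_iff.mpr ⟨i, ?_⟩⟩
      show max (l i) (min (u i) ((x - μ • a - v) i)) ≠ x i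
      rw [heq μ]
      have h1' : μ * (|a i| + 1) ≤ v i := (le_div_iff₀ (by positivity)).mp hμb
      have h2' : μ * a i ≥ -(μ * |a i|) :=
        by nlinarith [neg_abs_le (a i)]
      exact scalar_pos hlxi (by nlinarith)
    · refine ⟨-(v i) / (|a i| + 1), div_pos (by linarith) (by positivity), fun μ hμ hμb => Function.ne_iff.mpr ⟨i, ?_⟩⟩
      show max (l i) (min (u i) ((x - μ • a - v) i)) ≠ x i
      rw [heq μ]
      have h1' : μ * (|a i| + 1) ≤ -(v i) := by
        have := (le_div_iff₀ (show (0:ℝ) < |a i| + 1 by positivity)).mp hμb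
        linarith
      have h2' : μ * a i ≤ μ * |a i| := by nlinarith [le_abs_self (a i)]
      exact scalar_neg hxui (by nlinarith)
end

section
/- Let γ_t ∈ (0, 1), ε > 0, and j′ ≥ 1 be given. Let {t_j} be a sequence of positive reals with t_{j+1} ≤ γ_t·t_j for all j ≥ j′ − 1, and such that t_j = t_{j−1}^{1+ε} and Y_{j+1} = t_{j−1}^{−ε} for all j ≥ j′. Let {k_j}_{j≥j′} be a strictly increasing sequence of nonnegative integers, and let {y_k} ⊂ ℝ^m and {c_k} ⊂ ℝ^m be sequences such that for every j ≥ j′: y_k = y_{k_j} for all k with k_j ≤ k < k_{j+1}, ‖y_{k_j}‖₂ ≤ Y_{j+1}, and ‖c_{k_j}‖₂ ≤ t_j. Then for every integer q ≥ 0, Σ_{k = k_{j′}}^{k_{j′+q+1} − 1} y_kᵀ(c_{k+1} − c_k) ≤ 2·t_{j′−1} / (1 − γ_t). -/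
/-!
On the block `[k_j, k_{j+1})` the multiplier is constant, so the sum telescopes to
`⟪y_{k_j}, c_{k_{j+1}} - c_{k_j}⟫ ≤ Y_{j+1} (t_{j+1} + t_j) ≤ 2 t_{j-1}^{-ε} t_{j-1}^{1+ε}`,
which is `2 t_{j-1}`. These block bounds decay geometrically with ratio `γ_t`, and summing
them gives `2 t_{j'-1} / (1 - γ_t)`.
-/

open Finset

section BlockSum

variable {E : Type*} [NormedAddCommGroup E] [InnerProductSpace ℝ E]

theorem sum_Ico_inner_sub_eq_of_const {y c : ℕ → E} {a b : ℕ} (hab : a ≤ b)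
    (hy : ∀ i, a ≤ i → i < b → y i = y a) :
    ∑ i ∈ Ico a b, (inner ℝ (y i) (c (i + 1) - c i) : ℝ) = inner ℝ (y a) (c b - c a) := by
  calc ∑ i ∈ Ico a b, (inner ℝ (y i) (c (i + 1) - c i) : ℝ)
      = ∑ i ∈ Ico a b, (inner ℝ (y a) (c (i + 1) - c i) : ℝ) :=
        sum_congr rfl fun i hi => by rw [hy i (mem_Ico.1 hi).1 (mem_Ico.1 hi).2]
    _ = inner ℝ (y a) (c b - c a) := by rw [← inner_sum, sum_Ico_sub c hab]

theorem real_inner_sub_le_two_mul_of_norm_le_rpow {v a b : E} {x ε : ℝ} (hx : 0 < x)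
    (hv : ‖v‖ ≤ x ^ (-ε)) (ha : ‖a‖ ≤ x ^ (1 + ε)) (hb : ‖b‖ ≤ x ^ (1 + ε)) :
    (inner ℝ v (a - b) : ℝ) ≤ 2 * x := by
  have hrpow : x ^ (-ε) * x ^ (1 + ε) = x := by
    rw [← Real.rpow_add hx, neg_add_cancel_comm_assoc, Real.rpow_one]
  calc (inner ℝ v (a - b) : ℝ) ≤ ‖v‖ * ‖a - b‖ := real_inner_le_norm _ _
    _ ≤ x ^ (-ε) * (x ^ (1 + ε) + x ^ (1 + ε)) :=
        mul_le_mul hv ((norm_sub_le a b).trans (add_le_add ha hb)) (norm_nonneg _)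
          (Real.rpow_nonneg hx.le _)
    _ = 2 * x := by rw [← two_mul, mul_left_comm, hrpow]

end BlockSum

theorem sum_Ico_eq_sum_range_sum_Ico {M : Type*} [AddCommMonoid M] (f : ℕ → M)
    {κ : ℕ → ℕ} (hκ : Monotone κ) (n : ℕ) :
    ∑ i ∈ Ico (κ 0) (κ n), f i = ∑ s ∈ range n, ∑ i ∈ Ico (κ s) (κ (s + 1)), f i := by
  induction n with
  | zero => simp
  | succ n ih =>
    rw [sum_range_succ, ← ih, sum_Ico_consecutive f (hκ n.zero_le) (hκ n.le_succ)]

theorem stmt8_general {m : ℕ} (γt ε : ℝ) (hγt : γt ∈ Set.Ioo (0 : ℝ) 1)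
    (j' : ℕ) (hj' : 1 ≤ j')
    (t Y : ℕ → ℝ) (ht_pos : ∀ j, 0 < t j)
    (ht_dec : ∀ j, j' - 1 ≤ j → t (j + 1) ≤ γt * t j)
    (ht_upd : ∀ j, j' ≤ j → t j = t (j - 1) ^ ((1 : ℝ) + ε))
    (hY_upd : ∀ j, j' ≤ j → Y (j + 1) = t (j - 1) ^ (-ε))
    (k : ℕ → ℕ) (hk_mono : ∀ j, j' ≤ j → k j < k (j + 1))
    (y c : ℕ → EuclideanSpace ℝ (Fin m))
    (hy_block : ∀ j, j' ≤ j → ∀ i, k j ≤ i → i < k (j + 1) → y i = y (k j))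
    (hy_bound : ∀ j, j' ≤ j → ‖y (k j)‖ ≤ Y (j + 1))
    (hc_target : ∀ j, j' ≤ j → ‖c (k j)‖ ≤ t j) :
    ∀ q : ℕ, ∑ i ∈ Finset.Ico (k j') (k (j' + q + 1)),
        (inner ℝ (y i) (c (i + 1) - c i) : ℝ) ≤ 2 * t (j' - 1) / (1 - γt) := by
  obtain ⟨hγ0, hγ1⟩ := hγt
  have ht_anti : ∀ j, j' ≤ j → t (j + 1) ≤ t j := fun j hj =>
    (ht_dec j (by omega)).trans (mul_le_of_le_one_left (ht_pos j).le hγ1.le)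
  have hblock : ∀ j, j' ≤ j → ∑ i ∈ Ico (k j) (k (j + 1)),
      (inner ℝ (y i) (c (i + 1) - c i) : ℝ) ≤ 2 * t (j - 1) := fun j hj => by
    rw [sum_Ico_inner_sub_eq_of_const (hk_mono j hj).le (hy_block j hj)]
    refine real_inner_sub_le_two_mul_of_norm_le_rpow (ε := ε) (ht_pos _) ?_ ?_ ?_
    · rw [← hY_upd j hj]; exact hy_bound j hj
    · rw [← ht_upd j hj]; exact (hc_target _ (by omega)).trans (ht_anti j hj)
    · rw [← ht_upd j hj]; exact hc_target j hj
  have hdecay : ∀ s, t (j' - 1 + s) ≤ γt ^ s * t (j' - 1) := fun s =>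
    le_geom (u := fun s => t (j' - 1 + s)) hγ0.le s fun i _ =>
      ht_dec (j' - 1 + i) (Nat.le_add_right _ _)
  have hk : Monotone fun s => k (j' + s) :=
    monotone_nat_of_le_succ fun s => (hk_mono _ (by omega)).le
  intro q
  calc ∑ i ∈ Ico (k j') (k (j' + q + 1)), (inner ℝ (y i) (c (i + 1) - c i) : ℝ)
      = ∑ s ∈ range (q + 1), ∑ i ∈ Ico (k (j' + s)) (k (j' + s + 1)),
          (inner ℝ (y i) (c (i + 1) - c i) : ℝ) :=
        sum_Ico_eq_sum_range_sum_Ico (fun i => (inner ℝ (y i) (c (i + 1) - c i) : ℝ)) hk (q + 1)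
    _ ≤ ∑ s ∈ range (q + 1), 2 * t (j' - 1) * γt ^ s := by
        refine sum_le_sum fun s _ => (hblock _ (by omega)).trans ?_
        rw [show j' + s - 1 = j' - 1 + s by omega]
        linarith [hdecay s]
    _ = 2 * t (j' - 1) * ∑ s ∈ Ico 0 (q + 1), γt ^ s := by rw [← mul_sum, range_eq_Ico]
    _ ≤ 2 * t (j' - 1) * (γt ^ 0 / (1 - γt)) :=
        mul_le_mul_of_nonneg_left (geom_sum_Ico_le_of_lt_one hγ0.le hγ1)
          (by linarith [ht_pos (j' - 1)])
    _ = 2 * t (j' - 1) / (1 - γt) := by ring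

/-- Partial-sum bound for the multiplier–constraint inner products: under the target update
rules `t_j = t_{j−1}^{1+ε}`, `Y_{j+1} = t_{j−1}^{−ε}`, geometric decrease `t_{j+1} ≤ γ_t t_j`,
block-constant multipliers `y` bounded by `Y_{j+1}`, and feasibility targets `‖c_{k_j}‖ ≤ t_j`,
one has `Σ_{k=k_{j'}}^{k_{j'+q+1}−1} y_kᵀ(c_{k+1} − c_k) ≤ 2 t_{j'−1}/(1 − γ_t)`. -/
theorem stmt8 {m : ℕ} (γt ε : ℝ) (hγt : γt ∈ Set.Ioo (0 : ℝ) 1) (hε : 0 < ε)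
    (j' : ℕ) (hj' : 1 ≤ j')
    (t Y : ℕ → ℝ) (ht_pos : ∀ j, 0 < t j)
    (ht_dec : ∀ j, j' - 1 ≤ j → t (j + 1) ≤ γt * t j)
    (ht_upd : ∀ j, j' ≤ j → t j = t (j - 1) ^ ((1 : ℝ) + ε))
    (hY_upd : ∀ j, j' ≤ j → Y (j + 1) = t (j - 1) ^ (-ε))
    (k : ℕ → ℕ) (hk_mono : ∀ j, j' ≤ j → k j < k (j + 1))
    (y c : ℕ → EuclideanSpace ℝ (Fin m))
    (hy_block : ∀ j, j' ≤ j → ∀ i, k j ≤ i → i < k (j + 1) → y i = y (k j))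
    (hy_bound : ∀ j, j' ≤ j → ‖y (k j)‖ ≤ Y (j + 1))
    (hc_target : ∀ j, j' ≤ j → ‖c (k j)‖ ≤ t j) :
    ∀ q : ℕ, ∑ i ∈ Finset.Ico (k j') (k (j' + q + 1)),
        (inner ℝ (y i) (c (i + 1) - c i) : ℝ) ≤ 2 * t (j' - 1) / (1 - γt) :=
  stmt8_general γt ε hγt j' hj' t Y ht_pos ht_dec ht_upd hY_upd k hk_mono y c hy_block hy_bound
    hc_target
end
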